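/- Let m be a nonnegative integer and β ∈ F_q. Then ∑_{a∈F_q^*} λ(-aβ)·K(λ;a²)^m = q·δ(m,q;β) - (q-1)^m. -/

import Mathlib

open Finset

/-- The canonical additive character `λ(x) = e^{2πi·tr(x)/3}` of a finite field of
characteristic 3, where tr is the absolute trace to F_3. -/
noncomputable def canChar (F : Type) [Field F] [Fintype F] [Algebra (ZMod 3) F] (x : F) : ℂ :=
  Complex.exp (2 * Real.pi * Complex.I * ((Algebra.trace (ZMod 3) F x).val : ℂ) / 3)

/-- The Kloosterman sum `K(λ;a) = ∑_{α ∈ F^*} λ(α + a·α⁻¹)` for the canonical character. -/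
noncomputable def kloos (F : Type) [Field F] [Fintype F] [DecidableEq F]
    [Algebra (ZMod 3) F] (a : F) : ℂ :=
  ∑ α ∈ Finset.univ.filter (fun α : F => α ≠ 0), canChar F (α + a * α⁻¹)

/-- `δ(m,q;β)`, the number of m-tuples (α₁,…,α_m) of nonzero elements with
`α₁ + α₁⁻¹ + ⋯ + α_m + α_m⁻¹ = β`.  (For m = 0 this is 1 if β = 0 and 0 otherwise.) -/
def deltaCount (F : Type) [Field F] [Fintype F] [DecidableEq F] (m : ℕ) (β : F) : ℕ :=
  (Finset.univ.filter
    (fun α : Fin m → F => (∀ i, α i ≠ 0) ∧ ∑ i, (α i + (α i)⁻¹) = β)).card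

/-!
The substitution `α ↦ a α` turns `K(λ; a²)` into `∑_{t ≠ 0} λ(a (t + t⁻¹))`, so `K(λ; a²)^m` is the
sum of `λ(a σ(g))` over the `(q-1)^m` tuples `g` of nonzero elements, where
`σ(g) = ∑ (gᵢ + gᵢ⁻¹)`. After exchanging the sums, orthogonality of the primitive character `λ`
gives `∑_{a ≠ 0} λ(a (σ(g) - β)) = q·[σ(g) = β] - 1`, and summing over `g` gives the identity.
-/

lemma AddChar.map_sum_eq_prod {A M : Type*} [AddCommMonoid A] [CommMonoid M] (ψ : AddChar A M)
    {ι : Type*} (s : Finset ι) (f : ι → A) : ψ (∑ i ∈ s, f i) = ∏ i ∈ s, ψ (f i) :=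
  map_prod ψ.toMonoidHom (fun i => Multiplicative.ofAdd (f i)) s

lemma AddChar.sum_pow_eq_sum_piFinset {A R ι : Type*} [AddCommMonoid A] [CommSemiring R]
    [DecidableEq ι] (ψ : AddChar A R) (s : Finset ι) (f : ι → A) (m : ℕ) :
    (∑ t ∈ s, ψ (f t)) ^ m = ∑ g ∈ Fintype.piFinset (fun _ : Fin m => s), ψ (∑ i, f (g i)) := by
  simp_rw [← Fin.prod_const, prod_univ_sum, ψ.map_sum_eq_prod]

section CharacterSums

variable {F R : Type*} [Field F] [Fintype F] [DecidableEq F] [CommRing R] (ψ : AddChar F R)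

lemma sum_nonzero_add_sq_mul_inv {a : F} (ha : a ≠ 0) :
    ∑ α ∈ univ.filter (fun α : F => α ≠ 0), ψ (α + a ^ 2 * α⁻¹)
      = ∑ t ∈ univ.filter (fun t : F => t ≠ 0), ψ (a * (t + t⁻¹)) := by
  refine sum_nbij' (a⁻¹ * ·) (a * ·) ?_ ?_ ?_ ?_ ?_ <;>
    simp only [mem_filter, mem_univ, true_and]
  · exact fun α hα => mul_ne_zero (inv_ne_zero ha) hα
  · exact fun t ht => mul_ne_zero ha ht
  · intro α _; field_simp
  · intro t _; field_simp
  · intro α hα; congr 1; field_simp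

lemma sum_nonzero_mulShift [IsDomain R] (hψ : ψ.IsPrimitive) (c : F) :
    ∑ a ∈ univ.filter (fun a : F => a ≠ 0), ψ (a * c)
      = (if c = 0 then (Fintype.card F : R) else 0) - 1 := by
  have hsplit := add_sum_erase univ (fun a => ψ (a * c)) (mem_univ 0)
  rw [AddChar.sum_mulShift c hψ, zero_mul, ψ.map_zero_eq_one, Nat.cast_ite, Nat.cast_zero] at hsplit
  rw [filter_ne', ← hsplit, add_sub_cancel_left]

end CharacterSums

lemma AddChar.IsPrimitive.compAddMonoidHom_trace {K L R : Type*} [Field K] [Field L] [Algebra K L]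
    [FiniteDimensional K L] [Algebra.IsSeparable K L] [CommRing R] {ψ : AddChar K R}
    (hψ : ψ.IsPrimitive) : (ψ.compAddMonoidHom (Algebra.trace K L).toAddMonoidHom).IsPrimitive := by
  refine AddChar.IsPrimitive.of_ne_one fun h => hψ one_ne_zero ?_
  ext y
  obtain ⟨x, rfl⟩ := Algebra.trace_surjective K L y
  simpa using congr($h x)

section CanonicalCharacter

variable (F : Type) [Field F] [Fintype F] [Algebra (ZMod 3) F]

noncomputable def canAddChar : AddChar F ℂ :=
  ZMod.stdAddChar.compAddMonoidHom (Algebra.trace (ZMod 3) F).toAddMonoidHom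

lemma canAddChar_apply (x : F) : canAddChar F x = canChar F x := by
  simp [canAddChar, canChar, ZMod.stdAddChar_apply, ZMod.toCircle_apply]

lemma canAddChar_isPrimitive : (canAddChar F).IsPrimitive :=
  have : FiniteDimensional (ZMod 3) F := Module.Finite.of_finite
  (ZMod.isPrimitive_stdAddChar 3).compAddMonoidHom_trace

end CanonicalCharacter

section Counting

variable {F : Type} [Field F] [Fintype F] [DecidableEq F]

lemma card_piFinset_nonzero (m : ℕ) :
    #(Fintype.piFinset fun _ : Fin m => univ.filter (fun a : F => a ≠ 0))
      = (Fintype.card F - 1) ^ m := by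
  simp [Fintype.card_piFinset, filter_ne', card_erase_of_mem]

lemma deltaCount_eq_card_filter_piFinset (m : ℕ) (β : F) :
    deltaCount F m β = #((Fintype.piFinset fun _ : Fin m => univ.filter (fun a : F => a ≠ 0)).filter
      fun g => ∑ i, (g i + (g i)⁻¹) = β) := by
  rw [deltaCount]
  congr 1
  ext g
  simp [Fintype.mem_piFinset]

end Counting

theorem moment_identity_general (r : ℕ) (F : Type) [Field F] [Fintype F]
    [DecidableEq F] [Algebra (ZMod 3) F] (hF : Fintype.card F = 3 ^ r)
    (m : ℕ) (β : F) :
    ∑ a ∈ Finset.univ.filter (fun a : F => a ≠ 0),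
      canChar F (-a * β) * (kloos F (a ^ 2)) ^ m
      = (3 ^ r : ℂ) * (deltaCount F m β : ℂ) - ((3 ^ r : ℂ) - 1) ^ m := by
  set S := univ.filter (fun a : F => a ≠ 0)
  set T := Fintype.piFinset fun _ : Fin m => S
  let σ : (Fin m → F) → F := fun g => ∑ i, (g i + (g i)⁻¹)
  have hkloos (a : F) (ha : a ∈ S) : canChar F (-a * β) * kloos F (a ^ 2) ^ m
      = ∑ g ∈ T, canAddChar F (a * (σ g - β)) := by
    simp_rw [kloos, ← canAddChar_apply]
    rw [sum_nonzero_add_sq_mul_inv _ (mem_filter.1 ha).2, AddChar.sum_pow_eq_sum_piFinset, mul_sum]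
    refine sum_congr rfl fun g _ => ?_
    rw [← AddChar.map_add_eq_mul, ← mul_sum]
    congr 1
    ring
  calc ∑ a ∈ S, canChar F (-a * β) * kloos F (a ^ 2) ^ m
      = ∑ g ∈ T, ∑ a ∈ S, canAddChar F (a * (σ g - β)) := by
        rw [sum_congr rfl hkloos, sum_comm]
    _ = ∑ g ∈ T, ((if σ g - β = 0 then (Fintype.card F : ℂ) else 0) - 1) :=
      sum_congr rfl fun g _ => sum_nonzero_mulShift _ (canAddChar_isPrimitive F) _
    _ = Fintype.card F * deltaCount F m β - ((Fintype.card F : ℂ) - 1) ^ m := by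
      rw [sum_sub_distrib, sum_ite, sum_const_zero, add_zero, sum_const, sum_const,
        card_piFinset_nonzero, deltaCount_eq_card_filter_piFinset]
      simp only [T, S, σ, sub_eq_zero, nsmul_eq_mul, mul_one]
      push_cast [Nat.cast_sub Fintype.card_pos]
      ring
    _ = _ := by rw [hF]; push_cast; rfl

/-- `∑_{a ∈ F_q^*} λ(-aβ)·K(λ;a²)^m = q·δ(m,q;β) - (q-1)^m`, where q = 3^r. -/
theorem moment_identity (r : ℕ) (hr : 0 < r) (F : Type) [Field F] [Fintype F]
    [DecidableEq F] [Algebra (ZMod 3) F] (hF : Fintype.card F = 3 ^ r)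
    (m : ℕ) (β : F) :
    ∑ a ∈ Finset.univ.filter (fun a : F => a ≠ 0),
      canChar F (-a * β) * (kloos F (a ^ 2)) ^ m
      = (3 ^ r : ℂ) * (deltaCount F m β : ℂ) - ((3 ^ r : ℂ) - 1) ^ m :=
  moment_identity_general r F hF m β
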